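/- arXiv:2108.13678 — 5 statements merged into one kernel-verified Lean document; each statement's English description precedes it below -/
import Mathlib

section
/- Let V be a finite-dimensional real vector space, Q a symmetric bilinear form on V, and η ∈ V with Q(η,η) > 0. Suppose Q is negative definite on P = {γ ∈ V : Q(η,γ) = 0}. Then for α, β ∈ V with Q(α,α) > 0, equality Q(α,β)² = Q(α,α)·Q(β,β) holds if and only if α and β are linearly dependent. -/
/-- Negative definiteness transfers to the orthogonal complement of any
vector with positive square. -/
lemma aux_negdef {V : Type*} [AddCommGroup V] [Module ℝ V]
    (Q : LinearMap.BilinForm ℝ V) (hsym : ∀ x y, Q x y = Q y x)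
    (η : V) (hη : 0 < Q η η)
    (hdef : ∀ γ : V, Q η γ = 0 → γ ≠ 0 → Q γ γ < 0)
    (α : V) (hα : 0 < Q α α) :
    ∀ γ : V, Q α γ = 0 → γ ≠ 0 → Q γ γ < 0 := by
  intro γ hQ hγne
  by_contra hcon
  push_neg at hcon
  set a := Q η α with ha'
  set b := Q η γ with hb'
  set w : V := b • α - a • γ with hw
  have hQηw : Q η w = 0 := by
    simp only [hw, map_sub, map_smul, LinearMap.sub_apply, LinearMap.smul_apply,
      smul_eq_mul]
    ring
  by_cases hw0 : w = 0
  · have hba : b • α = a • γ := by rwa [hw, sub_eq_zero] at hw0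
    have hQγα : Q γ α = 0 := by rw [hsym]; exact hQ
    have hpair : Q (b • α) α = Q (a • γ) α := by rw [hba]
    have hb0 : b = 0 := by
      rw [map_smul, map_smul, LinearMap.smul_apply, LinearMap.smul_apply,
        smul_eq_mul, smul_eq_mul, hQγα, mul_zero] at hpair
      exact (mul_eq_zero.mp hpair).resolve_right (ne_of_gt hα)
    exact absurd (hdef γ hb0 hγne) (not_lt.2 hcon)
  · have hww : Q w w < 0 := hdef w hQηw hw0
    have hQγα : Q γ α = 0 := by rw [hsym]; exact hQ
    have hexp : Q w w = b ^ 2 * Q α α + a ^ 2 * Q γ γ := by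
      simp only [hw, map_sub, map_smul, LinearMap.sub_apply, LinearMap.smul_apply,
        smul_eq_mul, hQ, hQγα]
      ring
    have : 0 ≤ Q w w := by
      rw [hexp]
      have h1 : 0 ≤ b ^ 2 * Q α α := mul_nonneg (sq_nonneg b) hα.le
      have h2 : 0 ≤ a ^ 2 * Q γ γ := mul_nonneg (sq_nonneg a) hcon
      linarith
    linarith

theorem stmt1 {V : Type*} [AddCommGroup V] [Module ℝ V] [FiniteDimensional ℝ V]
    (Q : LinearMap.BilinForm ℝ V) (hsym : ∀ x y, Q x y = Q y x)
    (η : V) (hη : 0 < Q η η)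
    (hdef : ∀ γ : V, Q η γ = 0 → γ ≠ 0 → Q γ γ < 0)
    (α β : V) (hα : 0 < Q α α) :
    (Q α β) ^ 2 = Q α α * Q β β ↔
      ∃ s t : ℝ, (s ≠ 0 ∨ t ≠ 0) ∧ s • α + t • β = 0 := by
  have hnd := aux_negdef Q hsym η hη hdef α hα
  constructor
  · intro heq
    refine ⟨-(Q α β), Q α α, Or.inr (ne_of_gt hα), ?_⟩
    by_contra hne
    set γ : V := -(Q α β) • α + Q α α • β with hγ
    have hQβα : Q β α = Q α β := hsym β α
    have hQαγ : Q α γ = 0 := by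
      simp only [hγ, map_add, map_smul, smul_eq_mul]
      ring
    have hQγγ : Q γ γ = 0 := by
      simp only [hγ, map_add, map_smul, LinearMap.add_apply, LinearMap.smul_apply,
        smul_eq_mul, hQβα]
      nlinarith [heq]
    exact absurd hQγγ (ne_of_lt (hnd γ hQαγ hne))
  · rintro ⟨s, t, hst, heq⟩
    by_cases ht : t = 0
    · exfalso
      have hs : s ≠ 0 := hst.resolve_right (by simp [ht])
      rw [ht, zero_smul, add_zero] at heq
      have : α = 0 := (smul_eq_zero.mp heq).resolve_left hs
      rw [this] at hα
      simp at hα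
    · have hβ : β = (-(s / t)) • α := by
        have : t • β = -(s • α) := by
          rw [eq_neg_iff_add_eq_zero, add_comm]; exact heq
        rw [eq_comm, neg_smul, div_eq_inv_mul, mul_smul, ← smul_neg, ← this,
          smul_smul, inv_mul_cancel₀ ht, one_smul]
      rw [hβ]
      simp only [map_smul, LinearMap.smul_apply, smul_eq_mul]
      ring
end

section
/- Let V be a finite-dimensional real vector space and (Q_i) a sequence of symmetric bilinear forms on V converging to Q, with vectors η_i → η, such that each Q_i is negative definite on P_i = {γ : Q_i(η_i,γ) = 0}. If Q(η,·) ≠ 0 as a linear functional, then Q is negative semidefinite on P = {γ : Q(η,γ) = 0}. -/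
open Filter Topology

theorem stmt4 {V : Type*} [NormedAddCommGroup V] [NormedSpace ℝ V] [FiniteDimensional ℝ V]
    (Qs : ℕ → LinearMap.BilinForm ℝ V) (Q : LinearMap.BilinForm ℝ V)
    (hsyms : ∀ i x y, Qs i x y = Qs i y x) (hsym : ∀ x y, Q x y = Q y x)
    (ηs : ℕ → V) (η : V)
    (hQconv : ∀ x y : V, Filter.Tendsto (fun i => Qs i x y) Filter.atTop (nhds (Q x y)))
    (hηconv : Filter.Tendsto ηs Filter.atTop (nhds η))
    (hdef : ∀ i, ∀ γ : V, Qs i (ηs i) γ = 0 → γ ≠ 0 → Qs i γ γ < 0)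
    (hne : Q η ≠ 0) :
    ∀ γ : V, Q η γ = 0 → Q γ γ ≤ 0 := by
  classical
  intro γ hγ
  obtain ⟨δ, hδ0⟩ := DFunLike.ne_iff.mp hne
  have hδ : Q η δ ≠ 0 := by simpa using hδ0
  -- joint convergence lemma
  have key : ∀ x : V, Tendsto (fun i => Qs i (ηs i) x) atTop (𝓝 (Q η x)) := by
    intro x
    set b := Module.finBasis ℝ V with hbdef
    have hrepr : ∀ (B : LinearMap.BilinForm ℝ V) (v : V),
        B v x = ∑ j, b.repr v j * B (b j) x := by
      intro B v
      conv_lhs => rw [← b.sum_repr v]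
      rw [map_sum, LinearMap.sum_apply]
      simp [smul_eq_mul]
    have heq : (fun i => Qs i (ηs i) x) = fun i => ∑ j, b.repr (ηs i) j * Qs i (b j) x := by
      funext i; exact hrepr (Qs i) (ηs i)
    rw [heq, hrepr Q η]
    apply tendsto_finset_sum
    intro j _
    have hcoord : Tendsto (fun i => b.repr (ηs i) j) atTop (𝓝 (b.repr η j)) := by
      have hcont : Continuous fun v : V => b.coord j v :=
        (b.coord j).continuous_of_finiteDimensional
      simpa [Module.Basis.coord_apply, Function.comp_def] using (hcont.tendsto η).comp hηconv
    exact hcoord.mul (hQconv (b j) x)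
  have hd : Tendsto (fun i => Qs i (ηs i) δ) atTop (𝓝 (Q η δ)) := key δ
  have hc : Tendsto (fun i => Qs i (ηs i) γ) atTop (𝓝 0) := hγ ▸ key γ
  set t : ℕ → ℝ := fun i => Qs i (ηs i) γ / Qs i (ηs i) δ with ht
  have htt : Tendsto t atTop (𝓝 0) := by
    have := hc.div hd hδ
    simpa [ht, Pi.div_def] using this
  set g : ℕ → V := fun i => γ - t i • δ with hg
  have hexpand : ∀ i, Qs i (g i) (g i)
      = Qs i γ γ - t i * Qs i δ γ - t i * Qs i γ δ + t i * (t i * Qs i δ δ) := by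
    intro i
    simp only [hg, map_sub, map_smul, LinearMap.sub_apply, LinearMap.smul_apply, smul_eq_mul]
    ring
  have hlim : Tendsto (fun i => Qs i (g i) (g i)) atTop (𝓝 (Q γ γ)) := by
    have h1 : Tendsto (fun i => Qs i γ γ - t i * Qs i δ γ - t i * Qs i γ δ
        + t i * (t i * Qs i δ δ)) atTop
        (𝓝 (Q γ γ - 0 * Q δ γ - 0 * Q γ δ + 0 * (0 * Q δ δ))) :=
      (((hQconv γ γ).sub (htt.mul (hQconv δ γ))).sub (htt.mul (hQconv γ δ))).add
        (htt.mul (htt.mul (hQconv δ δ)))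
    have h2 : (fun i => Qs i (g i) (g i)) = fun i => Qs i γ γ - t i * Qs i δ γ
        - t i * Qs i γ δ + t i * (t i * Qs i δ δ) := funext hexpand
    rw [h2]
    simpa using h1
  have hev : ∀ᶠ i in atTop, Qs i (g i) (g i) ≤ 0 := by
    have hdne : ∀ᶠ i in atTop, Qs i (ηs i) δ ≠ 0 := hd.eventually_ne hδ
    filter_upwards [hdne] with i hi
    have horth : Qs i (ηs i) (g i) = 0 := by
      simp only [hg, map_sub, map_smul, smul_eq_mul, ht]
      field_simp
      ring
    rcases eq_or_ne (g i) 0 with h0 | h0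
    · simp [h0]
    · exact (hdef i (g i) horth h0).le
  exact le_of_tendsto hlim hev
end

section
/- Let V be a finite-dimensional real vector space, Q a symmetric bilinear form on V, and η ∈ V with Q(η,η) > 0. Suppose Q is negative semidefinite on P = {γ : Q(η,γ) = 0} and that every γ ∈ P with Q(γ,γ) = 0 satisfies Q(γ,·) = 0 on all of V. If β ∈ V satisfies Q(η,β)² = Q(η,η)·Q(β,β), then the linear functionals Q(η,·) and Q(β,·) on V are proportional. -/
theorem stmt5 {V : Type*} [AddCommGroup V] [Module ℝ V] [FiniteDimensional ℝ V]
    (Q : LinearMap.BilinForm ℝ V) (hsym : ∀ x y, Q x y = Q y x)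
    (η : V) (hη : 0 < Q η η)
    (hneg : ∀ γ : V, Q η γ = 0 → Q γ γ ≤ 0)
    (hrad : ∀ γ : V, Q η γ = 0 → Q γ γ = 0 → ∀ δ : V, Q γ δ = 0)
    (β : V) (heq : (Q η β) ^ 2 = Q η η * Q β β) :
    ∃ s t : ℝ, (s ≠ 0 ∨ t ≠ 0) ∧ ∀ δ : V, s * Q η δ + t * Q β δ = 0 := by
  set γ : V := (Q η η) • β - (Q η β) • η with hγ
  have hQηγ : Q η γ = 0 := by
    simp [hγ, map_sub, map_smul]
    ring
  have hQγγ : Q γ γ = 0 := by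
    have : Q γ γ = Q η η * (Q η η * Q β β - (Q η β)^2) := by
      simp [hγ, map_sub, map_smul, hsym β η]
      ring
    rw [this, ← heq]; ring
  have h := hrad γ hQηγ hQγγ
  refine ⟨-(Q η β), Q η η, Or.inr (ne_of_gt hη), fun δ => ?_⟩
  have hδ := h δ
  simp [hγ, map_sub, map_smul] at hδ
  linarith
end

section
/- Let V be a finite-dimensional real vector space, Q a symmetric bilinear form on V with Q(η,η) > 0, negative semidefinite on P = {γ : Q(η,γ) = 0}, and such that every null vector of Q|_P lies in the radical of Q. Let α, β ∈ V with Q(α,α) = 0, Q(α,β) = 0, Q(β,β) = 0, and Q(α,·) ≠ 0. Then there exist s, t ∈ ℝ, not both zero, with Q(sα + tβ, ·) = 0 on V; in particular Q(α,·) and Q(β,·) are proportional functionals. -/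
theorem stmt6 {V : Type*} [AddCommGroup V] [Module ℝ V] [FiniteDimensional ℝ V]
    (Q : LinearMap.BilinForm ℝ V) (hsym : ∀ x y, Q x y = Q y x)
    (η : V) (hη : 0 < Q η η)
    (hneg : ∀ γ : V, Q η γ = 0 → Q γ γ ≤ 0)
    (hrad : ∀ γ : V, Q η γ = 0 → Q γ γ = 0 → ∀ δ : V, Q γ δ = 0)
    (α β : V) (hαα : Q α α = 0) (hαβ : Q α β = 0) (hββ : Q β β = 0)
    (hαne : Q α ≠ 0) :
    (∃ s t : ℝ, (s ≠ 0 ∨ t ≠ 0) ∧ ∀ δ : V, Q (s • α + t • β) δ = 0) ∧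
      (∃ c : ℝ, ∀ δ : V, Q β δ = c * Q α δ) := by
  set a := Q η α with ha
  set b := Q η β with hb
  have hβα : Q β α = 0 := by rw [hsym]; exact hαβ
  have hane : a ≠ 0 := by
    intro h0
    have := hrad α h0 hαα
    exact hαne (LinearMap.ext fun δ => by simpa using this δ)
  have hγη : Q η (b • α + (-a) • β) = 0 := by
    simp only [map_add, map_smul, smul_eq_mul, ← ha, ← hb]; ring
  have hγγ : Q (b • α + (-a) • β) (b • α + (-a) • β) = 0 := by
    simp only [map_add, map_smul, LinearMap.add_apply, LinearMap.smul_apply, smul_eq_mul,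
      hαα, hαβ, hβα, hββ]
    ring
  have hγ : ∀ δ : V, Q (b • α + (-a) • β) δ = 0 := hrad _ hγη hγγ
  refine ⟨⟨b, -a, Or.inr (neg_ne_zero.mpr hane), hγ⟩, ⟨b / a, fun δ => ?_⟩⟩
  have := hγ δ
  simp only [map_add, map_smul, LinearMap.add_apply, LinearMap.smul_apply, smul_eq_mul] at this
  field_simp
  linarith
end

section
/- Let ω₁, …, ω_{n-2}, ω be positive definite n×n Hermitian matrices. Every Hermitian matrix B decomposes uniquely as B = c·ω + P with c ∈ ℝ and D(ω₁,…,ω_{n-2},ω,P) = 0, where c = D(ω₁,…,ω_{n-2},ω,B)/D(ω₁,…,ω_{n-2},ω,ω). -/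
open scoped ComplexOrder

/-- The mixed discriminant of `m` Hermitian `m × m` complex matrices: the full
polarization of the determinant, `D(A, …, A) = det A`. -/
noncomputable def mixedDisc {m : ℕ} (A : Fin m → Matrix (Fin m) (Fin m) ℂ) : ℝ :=
  ((m.factorial : ℂ)⁻¹ *
    ∑ σ : Equiv.Perm (Fin m), (Matrix.of fun i j => A (σ j) i j).det).re

/-- `D(A₁, …, Aₙ, X, Y)` for a family of `n` matrices of size `n + 2` together
with two extra entries `X`, `Y`. -/
noncomputable def mixedDisc2 {n : ℕ} (A : Fin n → Matrix (Fin (n + 2)) (Fin (n + 2)) ℂ)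
    (X Y : Matrix (Fin (n + 2)) (Fin (n + 2)) ℂ) : ℝ :=
  mixedDisc (Fin.snoc (Fin.snoc A X) Y)

open Matrix Finset Equiv

namespace MixedDiscAux

def permPairEquiv (G : Type*) [Group G] : (G × G) ≃ (G × G) :=
  { toFun := fun p => (p.2 * p.1⁻¹, p.1⁻¹)
    invFun := fun q => (q.2⁻¹, q.1 * q.2⁻¹)
    left_inv := by intro p; simp [mul_assoc]
    right_inv := by intro q; simp [mul_assoc] }

noncomputable def core {m : ℕ} (A : Fin m → Matrix (Fin m) (Fin m) ℂ) : ℂ :=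
  ∑ x : Equiv.Perm (Fin m) × Equiv.Perm (Fin m),
    (((Equiv.Perm.sign x.1 : ℤ) * (Equiv.Perm.sign x.2 : ℤ) : ℤ) : ℂ) *
      ∏ i, A i (x.1 i) (x.2 i)

lemma sum_det_eq_core {m : ℕ} (A : Fin m → Matrix (Fin m) (Fin m) ℂ) :
    (∑ σ : Equiv.Perm (Fin m), (Matrix.of fun i j => A (σ j) i j).det) = core A := by
  have h1 : ∀ ρ : Equiv.Perm (Fin m),
      (Matrix.of fun i j => A (ρ j) i j).det
        = ∑ π : Equiv.Perm (Fin m), ((Equiv.Perm.sign π : ℤ) : ℂ) * ∏ j, A (ρ j) (π j) j := by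
    intro ρ
    rw [Matrix.det_apply]
    refine Finset.sum_congr rfl fun π _ => ?_
    simp [Units.smul_def, zsmul_eq_mul]
  calc (∑ σ : Equiv.Perm (Fin m), (Matrix.of fun i j => A (σ j) i j).det)
      = ∑ x : Equiv.Perm (Fin m) × Equiv.Perm (Fin m),
          ((Equiv.Perm.sign x.2 : ℤ) : ℂ) * ∏ j, A (x.1 j) (x.2 j) j := by
        rw [Fintype.sum_prod_type]
        exact Finset.sum_congr rfl fun ρ _ => h1 ρ
    _ = core A := by
        refine Fintype.sum_equiv (permPairEquiv _) _ _ fun p => ?_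
        obtain ⟨ρ, π⟩ := p
        have hprod : (∏ i, A i (π (ρ⁻¹ i)) (ρ⁻¹ i)) = ∏ j, A (ρ j) (π j) j := by
          rw [← Equiv.prod_comp ρ (fun i => A i (π (ρ⁻¹ i)) (ρ⁻¹ i))]
          simp
        have hsgn : ((Equiv.Perm.sign (π * ρ⁻¹) : ℤ) * (Equiv.Perm.sign ρ⁻¹ : ℤ) : ℤ)
            = (Equiv.Perm.sign π : ℤ) := by
          simp [mul_comm, mul_assoc, ← mul_assoc]
        show _ = (((Equiv.Perm.sign (π * ρ⁻¹) : ℤ) * (Equiv.Perm.sign ρ⁻¹ : ℤ) : ℤ) : ℂ)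
            * ∏ i, A i ((π * ρ⁻¹) i) (ρ⁻¹ i)
        rw [hsgn]
        simp only [Equiv.Perm.mul_apply, hprod]

lemma mixedDisc_eq_core {m : ℕ} (A : Fin m → Matrix (Fin m) (Fin m) ℂ) :
    mixedDisc A = (m.factorial : ℝ)⁻¹ * (core A).re := by
  rw [mixedDisc, sum_det_eq_core]
  rw [show ((m.factorial : ℂ))⁻¹ = (((m.factorial : ℝ)⁻¹ : ℝ) : ℂ) by push_cast; ring]
  rw [Complex.re_ofReal_mul]

lemma core_nonneg {m : ℕ} (A : Fin m → Matrix (Fin m) (Fin m) ℂ)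
    (hA : ∀ i, (A i).PosSemidef) : 0 ≤ (core A).re := by
  choose C hC using fun i => (show ∃ C : Matrix (Fin m) (Fin m) ℂ, A i = Cᴴ * C by
    open scoped MatrixOrder in
    obtain ⟨C, hC⟩ := CStarAlgebra.nonneg_iff_eq_star_mul_self.mp (hA i).nonneg
    exact ⟨C, hC⟩)
  have hent : ∀ i p q, A i p q = ∑ l, star (C i l p) * C i l q := by
    intro i p q
    rw [hC i, Matrix.mul_apply]
    simp [Matrix.conjTranspose_apply]
  set d : (Fin m → Fin m) → ℂ := fun L =>
    ∑ σ : Equiv.Perm (Fin m), ((Equiv.Perm.sign σ : ℤ) : ℂ) * ∏ i, C i (L i) (σ i) with hd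
  have h2 : ∀ σ τ : Equiv.Perm (Fin m), (∏ i, A i (σ i) (τ i))
      = ∑ L : Fin m → Fin m, (∏ i, star (C i (L i) (σ i))) * (∏ i, C i (L i) (τ i)) := by
    intro σ τ
    calc (∏ i, A i (σ i) (τ i)) = ∏ i, ∑ l, star (C i l (σ i)) * C i l (τ i) :=
          Finset.prod_congr rfl fun i _ => hent i _ _
      _ = ∑ L : Fin m → Fin m, ∏ i, star (C i (L i) (σ i)) * C i (L i) (τ i) :=
          Fintype.prod_sum _
      _ = _ := Finset.sum_congr rfl fun L _ => by rw [Finset.prod_mul_distrib]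
  have hstar : ∀ L, star (d L) = ∑ σ : Equiv.Perm (Fin m),
      ((Equiv.Perm.sign σ : ℤ) : ℂ) * ∏ i, star (C i (L i) (σ i)) := by
    intro L
    rw [hd]
    simp only [star_sum, star_mul', star_prod]
    refine Finset.sum_congr rfl fun σ _ => ?_
    congr 1
    exact star_intCast _
  have key : core A = ∑ L : Fin m → Fin m, star (d L) * d L := by
    unfold core
    simp_rw [h2, Finset.mul_sum]
    rw [Finset.sum_comm]
    refine Finset.sum_congr rfl fun L _ => ?_
    rw [hstar L, hd, Finset.sum_mul_sum]
    rw [Fintype.sum_prod_type]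
    refine Finset.sum_congr rfl fun σ _ => Finset.sum_congr rfl fun τ _ => ?_
    push_cast
    ring
  rw [key]
  rw [Complex.re_sum]
  refine Finset.sum_nonneg fun L _ => ?_
  rw [Complex.star_def, mul_comm, Complex.mul_conj]
  simp [Complex.normSq_nonneg]

lemma prod_update_entry {m : ℕ} (A : Fin m → Matrix (Fin m) (Fin m) ℂ) (k : Fin m)
    (Z : Matrix (Fin m) (Fin m) ℂ) (σ τ : Equiv.Perm (Fin m)) :
    (∏ i, (Function.update A k Z) i (σ i) (τ i))
      = Z (σ k) (τ k) * ∏ i ∈ Finset.univ \ {k}, A i (σ i) (τ i) := by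
  have h : (fun i => (Function.update A k Z) i (σ i) (τ i))
      = Function.update (fun i => A i (σ i) (τ i)) k (Z (σ k) (τ k)) := by
    funext i
    rcases eq_or_ne i k with rfl | h
    · simp
    · simp [Function.update_of_ne h]
  rw [show (∏ i, (Function.update A k Z) i (σ i) (τ i))
      = ∏ i, Function.update (fun i => A i (σ i) (τ i)) k (Z (σ k) (τ k)) i from by rw [h]]
  exact Finset.prod_update_of_mem (Finset.mem_univ k) _ _

lemma core_update_add {m : ℕ} (A : Fin m → Matrix (Fin m) (Fin m) ℂ) (k : Fin m)
    (X Y : Matrix (Fin m) (Fin m) ℂ) :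
    core (Function.update A k (X + Y))
      = core (Function.update A k X) + core (Function.update A k Y) := by
  unfold core
  rw [← Finset.sum_add_distrib]
  refine Finset.sum_congr rfl fun x _ => ?_
  rw [prod_update_entry, prod_update_entry, prod_update_entry, Matrix.add_apply]
  ring

lemma core_update_smul {m : ℕ} (A : Fin m → Matrix (Fin m) (Fin m) ℂ) (k : Fin m)
    (c : ℂ) (X : Matrix (Fin m) (Fin m) ℂ) :
    core (Function.update A k (c • X)) = c * core (Function.update A k X) := by
  unfold core
  rw [Finset.mul_sum]
  refine Finset.sum_congr rfl fun x _ => ?_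
  rw [prod_update_entry, prod_update_entry, Matrix.smul_apply, smul_eq_mul]
  ring

lemma mixedDisc_update_add {m : ℕ} (A : Fin m → Matrix (Fin m) (Fin m) ℂ) (k : Fin m)
    (X Y : Matrix (Fin m) (Fin m) ℂ) :
    mixedDisc (Function.update A k (X + Y))
      = mixedDisc (Function.update A k X) + mixedDisc (Function.update A k Y) := by
  rw [mixedDisc_eq_core, mixedDisc_eq_core, mixedDisc_eq_core, core_update_add]
  rw [Complex.add_re]
  ring

lemma mixedDisc_update_smul {m : ℕ} (A : Fin m → Matrix (Fin m) (Fin m) ℂ) (k : Fin m)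
    (c : ℝ) (X : Matrix (Fin m) (Fin m) ℂ) :
    mixedDisc (Function.update A k (c • X)) = c * mixedDisc (Function.update A k X) := by
  have h : (c • X) = ((c : ℂ) • X) := by
    ext i j
    simp [Complex.real_smul]
  rw [h, mixedDisc_eq_core, mixedDisc_eq_core, core_update_smul]
  rw [Complex.re_ofReal_mul]
  ring

lemma mixedDisc_nonneg {m : ℕ} (A : Fin m → Matrix (Fin m) (Fin m) ℂ)
    (hA : ∀ i, (A i).PosSemidef) : 0 ≤ mixedDisc A := by
  rw [mixedDisc_eq_core]
  exact mul_nonneg (by positivity) (core_nonneg A hA)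

lemma mixedDisc_smul_one {m : ℕ} (ε : Fin m → ℝ) :
    mixedDisc (fun i => ε i • (1 : Matrix (Fin m) (Fin m) ℂ)) = ∏ i, ε i := by
  have hdiag : ∀ σ : Equiv.Perm (Fin m),
      (Matrix.of fun i j => (ε (σ j) • (1 : Matrix (Fin m) (Fin m) ℂ)) i j)
        = Matrix.diagonal (fun j => ((ε (σ j) : ℝ) : ℂ)) := by
    intro σ
    ext i j
    rcases eq_or_ne i j with rfl | h
    · simp [Matrix.one_apply, Complex.real_smul]
    · simp [Matrix.one_apply_ne h, Matrix.diagonal_apply_ne _ h]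
  have hdet : ∀ σ : Equiv.Perm (Fin m),
      (Matrix.of fun i j => (ε (σ j) • (1 : Matrix (Fin m) (Fin m) ℂ)) i j).det
        = ((∏ i, ε i : ℝ) : ℂ) := by
    intro σ
    rw [hdiag σ, Matrix.det_diagonal]
    push_cast
    exact Equiv.prod_comp σ (fun i => ((ε i : ℝ) : ℂ))
  unfold mixedDisc
  rw [Finset.sum_congr rfl fun σ _ => hdet σ, Finset.sum_const, Finset.card_univ,
    Fintype.card_perm, Fintype.card_fin]
  rw [nsmul_eq_mul]
  rw [show ((m.factorial : ℂ))⁻¹ * ((m.factorial : ℕ) * ((∏ i, ε i : ℝ) : ℂ))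
      = ((∏ i, ε i : ℝ) : ℂ) from by
    rw [← mul_assoc, inv_mul_cancel₀ (by exact_mod_cast Nat.factorial_ne_zero m), one_mul]]
  simp [← Complex.ofReal_prod]

lemma smul_one_posSemidef {k : ℕ} {ε : ℝ} (hε : 0 ≤ ε) :
    (ε • (1 : Matrix (Fin k) (Fin k) ℂ)).PosSemidef := by
  have h : ε • (1 : Matrix (Fin k) (Fin k) ℂ) = Matrix.diagonal (fun _ => ((ε : ℝ) : ℂ)) := by
    ext i j
    rcases eq_or_ne i j with rfl | h
    · simp [Matrix.one_apply, Complex.real_smul]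
    · simp [Matrix.one_apply_ne h, Matrix.diagonal_apply_ne _ h]
  rw [h]
  refine Matrix.posSemidef_diagonal_iff.mpr fun i => ?_
  exact_mod_cast hε

lemma exists_eps {k : ℕ} (hk : 0 < k) (A : Matrix (Fin k) (Fin k) ℂ) (hA : A.PosDef) :
    ∃ ε : ℝ, 0 < ε ∧ (A - ε • 1).PosSemidef := by
  haveI : Nonempty (Fin k) := ⟨⟨0, hk⟩⟩
  have hH := hA.1
  set lam := hH.eigenvalues with hlam
  set ε := Finset.univ.inf' Finset.univ_nonempty lam with hε
  have hεpos : 0 < ε := by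
    rw [hε, Finset.lt_inf'_iff]
    exact fun i _ => hA.eigenvalues_pos i
  refine ⟨ε, hεpos, ?_⟩
  set U : Matrix (Fin k) (Fin k) ℂ := (hH.eigenvectorUnitary : Matrix (Fin k) (Fin k) ℂ) with hUdef
  have hUU : U * star U = 1 := (Matrix.mem_unitaryGroup_iff).mp hH.eigenvectorUnitary.2
  have h1 : Matrix.diagonal (fun i => ((lam i - ε : ℝ) : ℂ))
      = Matrix.diagonal (RCLike.ofReal ∘ lam) - ε • 1 := by
    ext i j
    rcases eq_or_ne i j with rfl | h
    · simp [Matrix.one_apply, Complex.real_smul, Complex.ofReal_sub]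
    · simp [Matrix.diagonal_apply_ne _ h, Matrix.one_apply_ne h]
  have key : A - ε • 1 = U * Matrix.diagonal (fun i => ((lam i - ε : ℝ) : ℂ)) * star U := by
    rw [h1, Matrix.mul_sub, Matrix.sub_mul]
    conv_lhs => rw [hH.spectral_theorem, Unitary.conjStarAlgAut_apply]
    congr 1
    rw [Matrix.mul_smul, Matrix.mul_one, Matrix.smul_mul, hUU]
  rw [key]
  have hdiag : (Matrix.diagonal (fun i => ((lam i - ε : ℝ) : ℂ))).PosSemidef := by
    refine Matrix.posSemidef_diagonal_iff.mpr fun i => ?_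
    have : ε ≤ lam i := Finset.inf'_le _ (Finset.mem_univ i)
    have h2 : (0 : ℝ) ≤ lam i - ε := by linarith
    exact_mod_cast h2
  rw [Matrix.star_eq_conjTranspose]
  exact hdiag.mul_mul_conjTranspose_same U

lemma mixedDisc_pos {m : ℕ} (A : Fin m → Matrix (Fin m) (Fin m) ℂ)
    (hA : ∀ i, (A i).PosDef) : 0 < mixedDisc A := by
  rcases Nat.eq_zero_or_pos m with rfl | hm
  · simp [mixedDisc, Matrix.det_isEmpty]
  choose ε hεpos hpsd using fun i => exists_eps hm (A i) (hA i)
  have step : ∀ s : Finset (Fin m),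
      0 < mixedDisc (fun i => if i ∈ s then A i else ε i • 1) := by
    intro s
    induction s using Finset.induction_on with
    | empty =>
        simp only [Finset.notMem_empty, if_false]
        rw [mixedDisc_smul_one]
        exact Finset.prod_pos fun i _ => hεpos i
    | @insert k s hk ih =>
        set Cs : Fin m → Matrix (Fin m) (Fin m) ℂ :=
          fun i => if i ∈ s then A i else ε i • 1 with hCs
        have h1 : (fun i => if i ∈ insert k s then A i else ε i • 1)
            = Function.update Cs k (A k) := by
          funext i
          rcases eq_or_ne i k with rfl | h
          · simp [hCs]
          · simp [Function.update_of_ne h, hCs, Finset.mem_insert, h]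
        have h2 : Cs = Function.update Cs k (ε k • 1) := by
          funext i
          rcases eq_or_ne i k with rfl | h
          · simp [hCs, hk]
          · simp [Function.update_of_ne h]
        have hpsdCs : ∀ i, (Cs i).PosSemidef := by
          intro i
          rw [hCs]
          by_cases h : i ∈ s
          · simpa [h] using (hA i).posSemidef
          · simpa [h] using smul_one_posSemidef (le_of_lt (hεpos i))
        have h3 : A k = (A k - ε k • 1) + ε k • 1 := by abel
        rw [h1, h3, mixedDisc_update_add]
        have hnn : 0 ≤ mixedDisc (Function.update Cs k (A k - ε k • 1)) := by
          refine mixedDisc_nonneg _ fun i => ?_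
          rcases eq_or_ne i k with rfl | h
          · simpa using hpsd i
          · simpa [Function.update_of_ne h] using hpsdCs i
        rw [← h2]
        exact add_pos_of_nonneg_of_pos hnn ih
  have := step Finset.univ
  simpa using this

lemma snoc_eq_update {n : ℕ} (A : Fin n → Matrix (Fin (n + 2)) (Fin (n + 2)) ℂ)
    (X Y : Matrix (Fin (n + 2)) (Fin (n + 2)) ℂ) :
    Fin.snoc (Fin.snoc A X) Y
      = Function.update
          (Fin.snoc (Fin.snoc A X) 0 : Fin (n + 2) → Matrix (Fin (n + 2)) (Fin (n + 2)) ℂ)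
          (Fin.last (n + 1)) Y := by
  funext i
  rcases eq_or_ne i (Fin.last (n + 1)) with rfl | h
  · simp
  · obtain ⟨j, rfl⟩ := Fin.exists_castSucc_eq.mpr h
    simp [Function.update_of_ne h, Fin.snoc_castSucc]

lemma md2_add {n : ℕ} (A : Fin n → Matrix (Fin (n + 2)) (Fin (n + 2)) ℂ)
    (X Y Z : Matrix (Fin (n + 2)) (Fin (n + 2)) ℂ) :
    mixedDisc2 A X (Y + Z) = mixedDisc2 A X Y + mixedDisc2 A X Z := by
  unfold mixedDisc2
  rw [snoc_eq_update A X (Y + Z), snoc_eq_update A X Y, snoc_eq_update A X Z,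
    mixedDisc_update_add]

lemma md2_smul {n : ℕ} (A : Fin n → Matrix (Fin (n + 2)) (Fin (n + 2)) ℂ)
    (X : Matrix (Fin (n + 2)) (Fin (n + 2)) ℂ) (c : ℝ)
    (Y : Matrix (Fin (n + 2)) (Fin (n + 2)) ℂ) :
    mixedDisc2 A X (c • Y) = c * mixedDisc2 A X Y := by
  unfold mixedDisc2
  rw [snoc_eq_update A X (c • Y), snoc_eq_update A X Y, mixedDisc_update_smul]

lemma md2_pos {n : ℕ} (ω : Fin n → Matrix (Fin (n + 2)) (Fin (n + 2)) ℂ)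
    (hω : ∀ i, (ω i).PosDef) (w : Matrix (Fin (n + 2)) (Fin (n + 2)) ℂ)
    (hw : w.PosDef) : 0 < mixedDisc2 ω w w := by
  refine mixedDisc_pos _ fun i => ?_
  refine Fin.lastCases ?_ (fun j => ?_) i
  · simpa using hw
  · rw [Fin.snoc_castSucc]
    refine Fin.lastCases ?_ (fun l => ?_) j
    · simpa using hw
    · simpa using hω l

end MixedDiscAux

open MixedDiscAux in
theorem stmt14 {n : ℕ} (ω : Fin n → Matrix (Fin (n + 2)) (Fin (n + 2)) ℂ)
    (hω : ∀ i, (ω i).PosDef)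
    (w : Matrix (Fin (n + 2)) (Fin (n + 2)) ℂ) (hw : w.PosDef)
    (B : Matrix (Fin (n + 2)) (Fin (n + 2)) ℂ) (hB : B.IsHermitian) :
    (∃! p : ℝ × Matrix (Fin (n + 2)) (Fin (n + 2)) ℂ,
        p.2.IsHermitian ∧ mixedDisc2 ω w p.2 = 0 ∧ B = p.1 • w + p.2) ∧
      (∀ (c : ℝ) (P : Matrix (Fin (n + 2)) (Fin (n + 2)) ℂ),
        P.IsHermitian → mixedDisc2 ω w P = 0 → B = c • w + P →
          c = mixedDisc2 ω w B / mixedDisc2 ω w w) := by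
  have hDw : 0 < mixedDisc2 ω w w := md2_pos ω hω w hw
  have hDw' : mixedDisc2 ω w w ≠ 0 := ne_of_gt hDw
  set Dw := mixedDisc2 ω w w with hDwdef
  set DB := mixedDisc2 ω w B with hDBdef
  set c₀ : ℝ := DB / Dw with hc₀
  set P₀ := B - c₀ • w with hP₀
  have hsmulherm : ∀ c : ℝ, (c • w).IsHermitian := by
    intro c
    have : (c • w)ᴴ = c • wᴴ := by
      ext i j
      simp [Matrix.conjTranspose_apply, Complex.real_smul, _root_.map_mul]
    rw [Matrix.IsHermitian, this, hw.1.eq]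
  -- the key computation: for any (c, P) with B = c • w + P and D(P) = 0, c = c₀
  have hkey : ∀ (c : ℝ) (P : Matrix (Fin (n + 2)) (Fin (n + 2)) ℂ),
      mixedDisc2 ω w P = 0 → B = c • w + P → c = c₀ := by
    intro c P hP hBP
    have : DB = c * Dw := by
      rw [hDBdef, hBP, md2_add, md2_smul, hP, add_zero]
    rw [hc₀, this]
    field_simp
  have hP₀herm : P₀.IsHermitian := hB.sub (hsmulherm c₀)
  have hP₀zero : mixedDisc2 ω w P₀ = 0 := by
    have h1 : P₀ = B + (-c₀) • w := by rw [hP₀, neg_smul]; abel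
    rw [h1, md2_add, md2_smul, ← hDBdef, hc₀]
    field_simp
    rw [← hDwdef]; ring
  have hBdecomp : B = c₀ • w + P₀ := by rw [hP₀]; abel
  constructor
  · refine ⟨(c₀, P₀), ⟨hP₀herm, hP₀zero, hBdecomp⟩, ?_⟩
    rintro ⟨c, P⟩ ⟨h1, h2, h3⟩
    have hc : c = c₀ := hkey c P h2 h3
    have hP : P = P₀ := by
      rw [hP₀, ← hc]
      rw [h3]
      abel
    simp [hc, hP]
  · intro c P _ h2 h3
    exact hkey c P h2 h3
end
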